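/- Let A, B, C be an affinely independent triple in the Euclidean plane with incenter I = (a·A + b·B + c·C)/(2s) (where a = dist B C, b = dist C A, c = dist A B, s = (a+b+c)/2), circumcenter O, and orthocenter H; let N = midpoint of O and H be the nine-point center. Let H_A, H_B, H_C be the orthocenters of triangles BIC, CIA, AIB, let O_a, O_b, O_c be the circumcenters of triangles H_A B C, H_B C A, H_C A B respectively (each triple assumed affinely independent), and assume O_a, O_b, O_c are affinely independent. Then the circumcenter of triangle O_a O_b O_c equals the point reflection of I in N, i.e., equals O + H − I. -/

import Mathlib

open EuclideanGeometry
open scoped InnerProductSpace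

/-- The orthocenter of the triangle with vertices `A`, `B`, `C`. -/
noncomputable def orthocenter3 (A B C : EuclideanSpace ℝ (Fin 2))
    (h : AffineIndependent ℝ ![A, B, C]) : EuclideanSpace ℝ (Fin 2) :=
  Affine.Triangle.orthocenter ⟨![A, B, C], h⟩

/-- The circumcenter of the triangle with vertices `A`, `B`, `C`. -/
noncomputable def circumcenter3 (A B C : EuclideanSpace ℝ (Fin 2))
    (h : AffineIndependent ℝ ![A, B, C]) : EuclideanSpace ℝ (Fin 2) :=
  Affine.Simplex.circumcenter ⟨![A, B, C], h⟩

/-- The circumradius of the triangle with vertices `A`, `B`, `C`. -/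
noncomputable def circumradius3 (A B C : EuclideanSpace ℝ (Fin 2))
    (h : AffineIndependent ℝ ![A, B, C]) : ℝ :=
  Affine.Simplex.circumradius ⟨![A, B, C], h⟩

/-!
The circumcenter `M` of `BIC` is the midpoint of the arc `BC` of the circumcircle; it lies on the
line `AI` (trillium theorem). Since the orthocenter of `BIC` is `B + I + C - 2M`, the circumcircle
of `H_A B C` is the reflection of the circle `BIC` in `BC`, so `O_a = B + C - M`. With
`H = A + B + C - 2O` the claimed center is `F = A + B + C - O - I`, and `F - O_a = (A + M - I) - O`.
The point `A + M - I` is the reflection of `I` in the perpendicular bisector of the chord `AM`,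
which passes through `O`, so `dist O_a F = dist I O`; likewise for `O_b` and `O_c`.
-/

section
variable {V : Type*} [NormedAddCommGroup V] [InnerProductSpace ℝ V]

theorem dist_smul_add_smul_add_smul_sq {α β γ : ℝ} (h : α + β + γ = 1) (A B C P : V) :
    dist (α • A + β • B + γ • C) P ^ 2 =
      α * dist A P ^ 2 + β * dist B P ^ 2 + γ * dist C P ^ 2 -
        (α * β * dist A B ^ 2 + β * γ * dist B C ^ 2 + γ * α * dist C A ^ 2) := by
  have hP :
      α • A + β • B + γ • C - P = α • (A - P) + β • (B - P) + γ • (C - P) := by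
    calc _ = α • A + β • B + γ • C - (α + β + γ) • P := by rw [h, one_smul]
      _ = _ := by module
  rw [dist_eq_norm, dist_eq_norm, dist_eq_norm, dist_eq_norm, dist_eq_norm, dist_eq_norm,
    dist_eq_norm, hP, show A - B = (A - P) - (B - P) by abel,
    show B - C = (B - P) - (C - P) by abel, show C - A = (C - P) - (A - P) by abel]
  generalize A - P = x, B - P = y, C - P = z
  simp only [← real_inner_self_eq_norm_sq, inner_add_left, inner_add_right, inner_sub_left,
    inner_sub_right, real_inner_smul_left, real_inner_smul_right, real_inner_comm x y,
    real_inner_comm x z, real_inner_comm y z]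
  obtain rfl : γ = 1 - α - β := by linarith
  ring

theorem dist_lineMap_eq_dist_lineMap_of_dist_eq {A M O : V} (h : dist A O = dist M O) (t : ℝ) :
    dist (AffineMap.lineMap A M t) O = dist (AffineMap.lineMap M A t) O := by
  have key (X Y : V) : dist (AffineMap.lineMap X Y t) O ^ 2 =
      (1 - t) * dist X O ^ 2 + t * dist Y O ^ 2 - (1 - t) * t * dist X Y ^ 2 := by
    simpa [AffineMap.lineMap_apply_module] using
      dist_smul_add_smul_add_smul_sq (α := 1 - t) (β := t) (γ := 0) (by ring) X Y O O
  rw [← sq_eq_sq₀ dist_nonneg dist_nonneg, key, key, h, dist_comm A M]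

theorem dist_lt_dist_add_dist_of_not_collinear {A B C : V} (h : ¬ Collinear ℝ {A, B, C}) :
    dist B C < dist C A + dist A B := by
  rw [add_comm, dist_comm C A, dist_comm A B]
  exact dist_lt_dist_add_dist_iff.2 fun hw => h (by simpa [Set.insert_comm] using hw.collinear)

noncomputable def incenter3 (A B C : V) : V :=
  let a := dist B C; let b := dist C A; let c := dist A B
  (a / (a + b + c)) • A + (b / (a + b + c)) • B + (c / (a + b + c)) • C

/-- The second intersection of `AI` with the circumcircle, i.e. the midpoint of the arc `BC` not
containing `A`; its barycentric coordinates are `(-a² : b(b+c) : c(b+c))`. -/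
noncomputable def arcMidpoint (A B C : V) : V :=
  let a := dist B C; let b := dist C A; let c := dist A B
  (-a ^ 2 / ((b + c) ^ 2 - a ^ 2)) • A + (b * (b + c) / ((b + c) ^ 2 - a ^ 2)) • B +
    (c * (b + c) / ((b + c) ^ 2 - a ^ 2)) • C

theorem incenter3_rotate (A B C : V) : incenter3 B C A = incenter3 A B C := by
  simp only [incenter3]
  rw [show dist C A + dist A B + dist B C = dist B C + dist C A + dist A B by ring]
  abel

section Trillium
variable {A B C : V} {a b c : ℝ}

-- `arcMidpoint A B C` lies on the circumcircle: the correction term of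
-- `dist_smul_add_smul_add_smul_sq` vanishes for its barycentric coordinates.
theorem dist_arcMidpoint_sq (ha : dist B C = a) (hb : dist C A = b) (hc : dist A B = c)
    (hA : a < b + c) (P : V) :
    dist (arcMidpoint A B C) P ^ 2 =
      (-a ^ 2 * dist A P ^ 2 + b * (b + c) * dist B P ^ 2 + c * (b + c) * dist C P ^ 2) /
        ((b + c) ^ 2 - a ^ 2) := by
  have hD : (b + c) ^ 2 - a ^ 2 ≠ 0 := by nlinarith [ha ▸ dist_nonneg (x := B) (y := C)]
  simp only [arcMidpoint, ha, hb, hc]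
  rw [dist_smul_add_smul_add_smul_sq (by field_simp; ring), hb, hc, ha]
  field_simp
  ring

theorem incenter3_eq_lineMap_arcMidpoint (ha : dist B C = a) (hb : dist C A = b)
    (hc : dist A B = c) (hA : a < b + c) :
    incenter3 A B C = AffineMap.lineMap A (arcMidpoint A B C) ((b + c - a) / (b + c)) := by
  have : 0 ≤ a := ha ▸ dist_nonneg
  have hbc : b + c ≠ 0 := by linarith
  have hp : a + b + c ≠ 0 := by linarith
  have hD : (b + c) ^ 2 - a ^ 2 ≠ 0 := by nlinarith
  simp only [AffineMap.lineMap_apply_module, incenter3, arcMidpoint, ha, hb, hc]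
  match_scalars <;> field_simp <;> ring

theorem dist_arcMidpoint_eq_of_dist_eq (ha : dist B C = a) (hb : dist C A = b)
    (hc : dist A B = c) (hA : a < b + c) {O : V} (hB : dist B O = dist A O)
    (hC : dist C O = dist A O) : dist (arcMidpoint A B C) O = dist A O := by
  have hD : (b + c) ^ 2 - a ^ 2 ≠ 0 := by nlinarith [ha ▸ dist_nonneg (x := B) (y := C)]
  rw [← sq_eq_sq₀ dist_nonneg dist_nonneg, dist_arcMidpoint_sq ha hb hc hA, hB, hC]
  field_simp
  ring

theorem dist_arcMidpoint_left_eq_right (ha : dist B C = a) (hb : dist C A = b)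
    (hc : dist A B = c) (hA : a < b + c) :
    dist (arcMidpoint A B C) B = dist (arcMidpoint A B C) C := by
  rw [← sq_eq_sq₀ dist_nonneg dist_nonneg, dist_arcMidpoint_sq ha hb hc hA,
    dist_arcMidpoint_sq ha hb hc hA]
  simp only [dist_self, dist_comm A C, dist_comm C B, ha, hb, hc]
  ring

theorem dist_arcMidpoint_incenter3 (ha : dist B C = a) (hb : dist C A = b)
    (hc : dist A B = c) (hA : a < b + c) :
    dist (arcMidpoint A B C) (incenter3 A B C) = dist (arcMidpoint A B C) B := by
  have : 0 ≤ a := ha ▸ dist_nonneg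
  have hbc : b + c ≠ 0 := by linarith
  have hD : (b + c) ^ 2 - a ^ 2 ≠ 0 := by nlinarith
  rw [incenter3_eq_lineMap_arcMidpoint ha hb hc hA, dist_comm, dist_lineMap_right,
    ← sq_eq_sq₀ (by positivity) dist_nonneg, mul_pow, Real.norm_eq_abs, sq_abs, dist_comm,
    dist_arcMidpoint_sq ha hb hc hA, dist_arcMidpoint_sq ha hb hc hA]
  simp only [dist_self, dist_comm B A, dist_comm C B, ha, hb, hc]
  field_simp
  ring

end Trillium

-- `A + M - I` is the reflection of `I ∈ AM` in the perpendicular bisector of the chord `AM`,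
-- which passes through `O`.
theorem dist_add_sub_arcMidpoint {A B C I O : V} (hA : dist B C < dist C A + dist A B)
    (hI : incenter3 A B C = I) (hB : dist B O = dist A O) (hC : dist C O = dist A O) :
    dist (B + C - arcMidpoint A B C) (A + B + C - O - I) = dist I O := by
  set M := arcMidpoint A B C
  set t := (dist C A + dist A B - dist B C) / (dist C A + dist A B)
  have hIM : I = AffineMap.lineMap A M t := hI ▸ incenter3_eq_lineMap_arcMidpoint rfl rfl rfl hA
  have hM : dist A O = dist M O := (dist_arcMidpoint_eq_of_dist_eq rfl rfl rfl hA hB hC).symm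
  calc dist (B + C - M) (A + B + C - O - I) = dist (A + M - I) O := by
        rw [dist_eq_norm, dist_eq_norm, ← norm_neg]
        congr 1
        abel
    _ = dist (AffineMap.lineMap M A t) O := by
        rw [hIM, AffineMap.lineMap_apply_module, AffineMap.lineMap_apply_module]
        congr 1
        module
    _ = dist I O := by rw [hIM, dist_lineMap_eq_dist_lineMap_of_dist_eq hM]

end

section Plane
variable {A B C I X Y Z P Q : EuclideanSpace ℝ (Fin 2)}

theorem circumcenter3_eq_of_dist_eq (h : AffineIndependent ℝ ![X, Y, Z])
    (hY : dist Y P = dist X P) (hZ : dist Z P = dist X P) : circumcenter3 X Y Z h = P := by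
  have hspan : affineSpan ℝ (Set.range ![X, Y, Z]) = ⊤ := by
    rw [h.affineSpan_eq_top_iff_card_eq_finrank_add_one]
    simp
  refine (Affine.Simplex.eq_circumcenter_of_dist_eq _ (r := dist X P) ?_ ?_).symm
  · exact hspan ▸ AffineSubspace.mem_top _ _ _
  · intro i
    fin_cases i
    exacts [rfl, hY, hZ]

theorem dist_circumcenter3_eq (h : AffineIndependent ℝ ![X, Y, Z]) :
    dist Y (circumcenter3 X Y Z h) = dist X (circumcenter3 X Y Z h) ∧
      dist Z (circumcenter3 X Y Z h) = dist X (circumcenter3 X Y Z h) := by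
  have hr :=
    Affine.Simplex.dist_circumcenter_eq_circumradius' (⟨![X, Y, Z], h⟩ : Affine.Triangle ℝ _)
  exact ⟨by rw [dist_comm, dist_comm X]; exact (hr 1).trans (hr 0).symm,
    by rw [dist_comm, dist_comm X]; exact (hr 2).trans (hr 0).symm⟩

theorem orthocenter3_eq (h : AffineIndependent ℝ ![X, Y, Z]) :
    orthocenter3 X Y Z h = X + Y + Z - (2 : ℝ) • circumcenter3 X Y Z h := by
  have hcentroid :
      (Finset.univ : Finset (Fin 3)).centroid ℝ ![X, Y, Z] = (3 : ℝ)⁻¹ • (X + Y + Z) := by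
    rw [Finset.centroid_def, Finset.affineCombination_eq_linear_combination _ _ _
      (by simp [Finset.centroidWeights_apply])]
    simp [Fin.sum_univ_three, Finset.centroidWeights_apply, smul_add]
  rw [orthocenter3, circumcenter3, Affine.Triangle.orthocenter_eq_mongePoint,
    Affine.Simplex.mongePoint_eq_smul_vsub_vadd_circumcenter]
  simp only [hcentroid, vsub_eq_sub, vadd_eq_add]
  norm_num
  module

-- `Y + Z - P` is the reflection of `P` in the line `YZ`, since `P` is equidistant from `Y` and `Z`.
theorem circumcenter3_eq_add_sub_of_dist_eq (h : AffineIndependent ℝ ![Q, Y, Z])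
    (hQ : Q = X + Y + Z - (2 : ℝ) • P) (hY : dist Y P = dist X P) (hZ : dist Z P = dist X P) :
    circumcenter3 Q Y Z h = Y + Z - P := by
  have hYP : dist Y (Y + Z - P) = dist Z P := by
    rw [dist_eq_norm, dist_eq_norm', show Y - (Y + Z - P) = P - Z by abel]
  have hZP : dist Z (Y + Z - P) = dist Y P := by
    rw [dist_eq_norm, dist_eq_norm', show Z - (Y + Z - P) = P - Y by abel]
  have hQP : dist Q (Y + Z - P) = dist X P := by
    rw [hQ, dist_eq_norm, dist_eq_norm,
      show X + Y + Z - (2 : ℝ) • P - (Y + Z - P) = X - P by module]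
  exact circumcenter3_eq_of_dist_eq h (by rw [hYP, hQP, hZ]) (by rw [hZP, hQP, hY])

theorem circumcenter3_incenter3 (hA : dist B C < dist C A + dist A B)
    (hI : incenter3 A B C = I) (h : AffineIndependent ℝ ![B, I, C]) :
    circumcenter3 B I C h = arcMidpoint A B C := by
  subst hI
  apply circumcenter3_eq_of_dist_eq
  · rw [dist_comm, dist_arcMidpoint_incenter3 rfl rfl rfl hA, dist_comm]
  · rw [dist_comm, ← dist_arcMidpoint_left_eq_right rfl rfl rfl hA, dist_comm]

theorem circumcenter3_orthocenter3_incenter3 (hA : dist B C < dist C A + dist A B)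
    (hI : incenter3 A B C = I) (h : AffineIndependent ℝ ![B, I, C])
    (h' : AffineIndependent ℝ ![orthocenter3 B I C h, B, C]) :
    circumcenter3 (orthocenter3 B I C h) B C h' = B + C - arcMidpoint A B C := by
  have hM := circumcenter3_incenter3 hA hI h
  obtain ⟨hIM, hCM⟩ := dist_circumcenter3_eq h
  rw [hM] at hIM hCM
  refine circumcenter3_eq_add_sub_of_dist_eq h' ?_ hIM.symm (hCM.trans hIM.symm)
  rw [orthocenter3_eq, hM]
  abel

end Plane

theorem fuhrmann_center_general (A B C I O H HA HB HC Oa Ob Oc : EuclideanSpace ℝ (Fin 2))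
    (hABC : AffineIndependent ℝ ![A, B, C])
    (a b c s : ℝ)
    (ha : a = dist B C) (hb : b = dist C A) (hc : c = dist A B)
    (hs : s = (a + b + c) / 2)
    (hI : I = (2 * s)⁻¹ • (a • A + b • B + c • C))
    (hO : O = circumcenter3 A B C hABC)
    (hH : H = orthocenter3 A B C hABC)
    (hBIC : AffineIndependent ℝ ![B, I, C])
    (hCIA : AffineIndependent ℝ ![C, I, A])
    (hAIB : AffineIndependent ℝ ![A, I, B])
    (hHA : HA = orthocenter3 B I C hBIC)
    (hHB : HB = orthocenter3 C I A hCIA)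
    (hHC : HC = orthocenter3 A I B hAIB)
    (ha' : AffineIndependent ℝ ![HA, B, C])
    (hb' : AffineIndependent ℝ ![HB, C, A])
    (hc' : AffineIndependent ℝ ![HC, A, B])
    (hOa : Oa = circumcenter3 HA B C ha')
    (hOb : Ob = circumcenter3 HB C A hb')
    (hOc : Oc = circumcenter3 HC A B hc')
    (hF : AffineIndependent ℝ ![Oa, Ob, Oc]) :
    circumcenter3 Oa Ob Oc hF = O + H - I := by
  have hincA : incenter3 A B C = I := by
    rw [hI, show 2 * s = a + b + c by linarith, ha, hb, hc, incenter3]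
    module
  have hincB : incenter3 B C A = I := (incenter3_rotate A B C).trans hincA
  have hincC : incenter3 C A B = I := (incenter3_rotate B C A).trans hincB
  have hcol := affineIndependent_iff_not_collinear_set.mp hABC
  have hA := dist_lt_dist_add_dist_of_not_collinear hcol
  have hB := dist_lt_dist_add_dist_of_not_collinear (A := B) (B := C) (C := A)
    (by rwa [Set.pair_comm C A, Set.insert_comm B A])
  have hC := dist_lt_dist_add_dist_of_not_collinear (A := C) (B := A) (C := B)
    (by rwa [Set.insert_comm C A, Set.pair_comm C B])
  obtain ⟨hBO, hCO⟩ := dist_circumcenter3_eq hABC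
  rw [← hO] at hBO hCO
  have hFuhrmann : O + H - I = A + B + C - O - I := by
    rw [hH, orthocenter3_eq, ← hO]
    module
  subst hHA hHB hHC
  rw [circumcenter3_orthocenter3_incenter3 hA hincA] at hOa
  rw [circumcenter3_orthocenter3_incenter3 hB hincB] at hOb
  rw [circumcenter3_orthocenter3_incenter3 hC hincC] at hOc
  have hdA : dist Oa (O + H - I) = dist I O := by
    rw [hOa, hFuhrmann]
    exact dist_add_sub_arcMidpoint hA hincA hBO hCO
  have hdB : dist Ob (O + H - I) = dist I O := by
    rw [hOb, hFuhrmann, show A + B + C - O - I = B + C + A - O - I by abel]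
    exact dist_add_sub_arcMidpoint hB hincB (hCO.trans hBO.symm) hBO.symm
  have hdC : dist Oc (O + H - I) = dist I O := by
    rw [hOc, hFuhrmann, show A + B + C - O - I = C + A + B - O - I by abel]
    exact dist_add_sub_arcMidpoint hC hincC hCO.symm (hBO.trans hCO.symm)
  exact circumcenter3_eq_of_dist_eq hF (hdB.trans hdA.symm) (hdC.trans hdA.symm)

/-- The center of the Fuhrmann circle is the reflection of `I` in the nine-point
center `N`, i.e. it equals `O + H - I`. -/
theorem fuhrmann_center (A B C I O H N HA HB HC Oa Ob Oc : EuclideanSpace ℝ (Fin 2))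
    (hABC : AffineIndependent ℝ ![A, B, C])
    (a b c s : ℝ)
    (ha : a = dist B C) (hb : b = dist C A) (hc : c = dist A B)
    (hs : s = (a + b + c) / 2)
    (hI : I = (2 * s)⁻¹ • (a • A + b • B + c • C))
    (hO : O = circumcenter3 A B C hABC)
    (hH : H = orthocenter3 A B C hABC)
    (hN : N = midpoint ℝ O H)
    (hBIC : AffineIndependent ℝ ![B, I, C])
    (hCIA : AffineIndependent ℝ ![C, I, A])
    (hAIB : AffineIndependent ℝ ![A, I, B])
    (hHA : HA = orthocenter3 B I C hBIC)
    (hHB : HB = orthocenter3 C I A hCIA)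
    (hHC : HC = orthocenter3 A I B hAIB)
    (ha' : AffineIndependent ℝ ![HA, B, C])
    (hb' : AffineIndependent ℝ ![HB, C, A])
    (hc' : AffineIndependent ℝ ![HC, A, B])
    (hOa : Oa = circumcenter3 HA B C ha')
    (hOb : Ob = circumcenter3 HB C A hb')
    (hOc : Oc = circumcenter3 HC A B hc')
    (hF : AffineIndependent ℝ ![Oa, Ob, Oc]) :
    circumcenter3 Oa Ob Oc hF = O + H - I :=
  fuhrmann_center_general A B C I O H HA HB HC Oa Ob Oc hABC a b c s ha hb hc hs hI hO hH hBIC hCIA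
    hAIB hHA hHB hHC ha' hb' hc' hOa hOb hOc hF
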